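/- Let m = n = p and suppose μ := min_{i,j,k} e_{ijk} > 0 and M := max_{i,j,k} e_{ijk}, L := ∑_{i,j,k} l_{ijk} > 0. Then for every point of the invariant box U and all i, j, |∂φ_i/∂y_j| ≤ (l^x_i/l^x_1) · M(M² − μ²) l^y_1 / (μ³ L). -/

import Mathlib

/-!
Along the `j`-th coordinate the numerator and the denominator of `φ_i` are affine in `y_j`:
with `w a j = ∑ k, e a j k * z k ∈ [μZ, MZ]` they are `∑ j, w a j * y j ∈ [μZY, MZY]`
(`Y = ∑ y`, `Z = ∑ z`). The quotient rule and these interval bounds give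
`|∂φ_i/∂y_j| ≤ (l^x_i/l^x_1) (M² - μ²) / (μ² Y)`, and summing the box constraints over `j`
gives `Y ≥ μ L / (l^y_1 M)`.
-/

open Finset

section LinearForms

variable {ι κ : Type*}

theorem sum_mul_mem_Icc_of_forall_mem_Icc {s : Finset ι} {w g : ι → ℝ} {a b : ℝ}
    (hw : ∀ i ∈ s, w i ∈ Set.Icc a b) (hg : ∀ i ∈ s, 0 ≤ g i) :
    ∑ i ∈ s, w i * g i ∈ Set.Icc (a * ∑ i ∈ s, g i) (b * ∑ i ∈ s, g i) := by
  rw [mul_sum, mul_sum]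
  exact ⟨sum_le_sum fun i hi => mul_le_mul_of_nonneg_right (hw i hi).1 (hg i hi),
    sum_le_sum fun i hi => mul_le_mul_of_nonneg_right (hw i hi).2 (hg i hi)⟩

theorem mul_sum_le_mul_sum_of_forall_mul_div_le {s : Finset ι} {a y : ι → ℝ} {c D : ℝ}
    (hD : 0 < D) (h : ∀ i ∈ s, a i * c / D ≤ y i) : c * ∑ i ∈ s, a i ≤ D * ∑ i ∈ s, y i := by
  have hsum := sum_le_sum h
  rw [← sum_div, ← sum_mul, div_le_iff₀ hD] at hsum
  linarith

theorem sum_sum_mul_mul_eq_sum_mul [Fintype ι] [Fintype κ] (e : ι → κ → ℝ) (y : ι → ℝ)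
    (z : κ → ℝ) : ∑ j, ∑ k, e j k * y j * z k = ∑ j, (∑ k, e j k * z k) * y j :=
  sum_congr rfl fun j _ => by rw [sum_mul]; exact sum_congr rfl fun k _ => by ring

variable [Fintype ι] [DecidableEq ι]

theorem hasDerivAt_sum_mul_update (w y : ι → ℝ) (j : ι) (t : ℝ) :
    HasDerivAt (fun t => ∑ i, w i * Function.update y j t i) (w j) t := by
  have hcoord := hasDerivAt_pi.1 (hasDerivAt_update y j t)
  exact (HasDerivAt.fun_sum fun i _ => (hcoord i).const_mul (w i)).congr_deriv
    (by simp [Pi.single_apply])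

theorem deriv_const_mul_div_sum_mul_update (c : ℝ) (u v y : ι → ℝ) (j : ι)
    (hv : ∑ i, v i * y i ≠ 0) :
    deriv (fun t => c * ((∑ i, u i * Function.update y j t i) /
        ∑ i, v i * Function.update y j t i)) (y j)
      = c * ((u j * ∑ i, v i * y i - (∑ i, u i * y i) * v j) / (∑ i, v i * y i) ^ 2) := by
  have hu := hasDerivAt_sum_mul_update u y j (y j)
  have hv' := hasDerivAt_sum_mul_update v y j (y j)
  rw [← Function.update_eq_self j y] at hv
  rw [((hu.fun_div hv' hv).const_mul c).deriv, Function.update_eq_self]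

end LinearForms

theorem abs_mul_sub_mul_le {a a' s s' p P q Q : ℝ} (hp : 0 ≤ p) (hq : 0 ≤ q)
    (ha : a ∈ Set.Icc p P) (ha' : a' ∈ Set.Icc p P)
    (hs : s ∈ Set.Icc q Q) (hs' : s' ∈ Set.Icc q Q) :
    |a * s' - s * a'| ≤ P * Q - p * q := by
  obtain ⟨hpa, haP⟩ := ha
  obtain ⟨hpa', ha'P⟩ := ha'
  obtain ⟨hqs, hsQ⟩ := hs
  obtain ⟨hqs', hs'Q⟩ := hs'
  have hupper : ∀ {b r}, b ≤ P → r ≤ Q → 0 ≤ r → b * r ≤ P * Q := fun hb hr hr0 =>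
    mul_le_mul hb hr hr0 (hp.trans (hpa.trans haP))
  have hlower : ∀ {b r}, p ≤ b → q ≤ r → p * q ≤ b * r := fun hb hr =>
    mul_le_mul hb hr hq (hp.trans hb)
  rw [abs_sub_le_iff]
  constructor
  · linarith [hupper haP hs'Q (hq.trans hqs'), hlower hpa' hqs]
  · linarith [hupper ha'P hsQ (hq.trans hqs), hlower hpa hqs']

theorem abs_mul_sub_mul_div_sq_le {a a' s s' p P q Q : ℝ} (hp : 0 ≤ p) (hq : 0 < q)
    (ha : a ∈ Set.Icc p P) (ha' : a' ∈ Set.Icc p P)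
    (hs : s ∈ Set.Icc q Q) (hs' : s' ∈ Set.Icc q Q) :
    |(a * s' - s * a') / s' ^ 2| ≤ (P * Q - p * q) / q ^ 2 := by
  rw [abs_div, abs_of_nonneg (sq_nonneg s')]
  exact div_le_div₀ ((abs_nonneg _).trans (abs_mul_sub_mul_le hp hq.le ha ha' hs hs'))
    (abs_mul_sub_mul_le hp hq.le ha ha' hs hs') (by positivity)
    (pow_le_pow_left₀ hq.le hs'.1 2)

theorem interval_bound_le_rating_constant {μ M Y Z L ly : ℝ} (hμ : 0 < μ) (hμM : μ ≤ M)
    (hY : 0 < Y) (hZ : 0 < Z) (hL : 0 < L) (hYL : μ * L ≤ ly * M * Y) :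
    (M * Z * (M * Z * Y) - μ * Z * (μ * Z * Y)) / (μ * Z * Y) ^ 2
      ≤ M * (M ^ 2 - μ ^ 2) * ly / (μ ^ 3 * L) := by
  have hsq : 0 ≤ M ^ 2 - μ ^ 2 := by nlinarith
  calc (M * Z * (M * Z * Y) - μ * Z * (μ * Z * Y)) / (μ * Z * Y) ^ 2
      = (M ^ 2 - μ ^ 2) * (μ * L) / (μ ^ 3 * L * Y) := by field_simp
    _ ≤ (M ^ 2 - μ ^ 2) * (ly * M * Y) / (μ ^ 3 * L * Y) := by gcongr
    _ = M * (M ^ 2 - μ ^ 2) * ly / (μ ^ 3 * L) := by field_simp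

theorem rating_map_simplified_derivative_bound_general (d : ℕ) (hd : 0 < d)
    (e : Fin d → Fin d → Fin d → ℝ) (l : Fin d → Fin d → Fin d → ℝ)
    (hl : ∀ i j k, 0 ≤ l i j k)
    (μ M : ℝ) (hμ : 0 < μ)
    (hμdef : μ = Finset.univ.inf'
      (Finset.univ_nonempty_iff.mpr ⟨(⟨0, hd⟩, ⟨0, hd⟩, ⟨0, hd⟩)⟩)
      (fun v : Fin d × Fin d × Fin d => e v.1 v.2.1 v.2.2))
    (hMdef : M = Finset.univ.sup'
      (Finset.univ_nonempty_iff.mpr ⟨(⟨0, hd⟩, ⟨0, hd⟩, ⟨0, hd⟩)⟩)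
      (fun v : Fin d × Fin d × Fin d => e v.1 v.2.1 v.2.2))
    (L : ℝ) (hLdef : L = ∑ i, ∑ j, ∑ k, l i j k) (hL : 0 < L)
    (lx : Fin d → ℝ) (ly : Fin d → ℝ)
    (hlxdef : ∀ i, lx i = ∑ j, ∑ k, l i j k)
    (hlydef : ∀ j, ly j = ∑ i, ∑ k, l i j k)
    (hly1 : 0 < ly ⟨0, hd⟩)
    (y : Fin d → ℝ) (z : Fin d → ℝ)
    (hy : ∀ j', 0 < y j') (hz : ∀ k, 0 < z k)
    (hybox : ∀ j', ly j' * μ / (ly ⟨0, hd⟩ * M) ≤ y j')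
    (i : Fin d) (j : Fin d) :
    |deriv (fun t : ℝ => lx i / lx ⟨0, hd⟩ *
        ((∑ j', ∑ k, e ⟨0, hd⟩ j' k * Function.update y j t j' * z k) /
          (∑ j', ∑ k, e i j' k * Function.update y j t j' * z k))) (y j)|
      ≤ lx i / lx ⟨0, hd⟩ * (M * (M ^ 2 - μ ^ 2) * ly ⟨0, hd⟩ / (μ ^ 3 * L)) := by
  set i0 : Fin d := ⟨0, hd⟩
  have hne : (univ : Finset (Fin d)).Nonempty := ⟨i0, mem_univ _⟩
  have hμle : ∀ a b c, μ ≤ e a b c := fun a b c => hμdef ▸ inf'_le _ (mem_univ (a, b, c))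
  have heM : ∀ a b c, e a b c ≤ M := fun a b c =>
    hMdef ▸ le_sup' (fun v : Fin d × Fin d × Fin d => e v.1 v.2.1 v.2.2) (mem_univ (a, b, c))
  have hμM : μ ≤ M := (hμle i0 i0 i0).trans (heM i0 i0 i0)
  set Y := ∑ j', y j'
  set Z := ∑ k, z k
  have hY : 0 < Y := sum_pos (fun j' _ => hy j') hne
  have hZ : 0 < Z := sum_pos (fun k _ => hz k) hne
  set w : Fin d → Fin d → ℝ := fun a j' => ∑ k, e a j' k * z k
  have hw : ∀ a j', w a j' ∈ Set.Icc (μ * Z) (M * Z) := fun a j' =>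
    sum_mul_mem_Icc_of_forall_mem_Icc (fun k _ => ⟨hμle a j' k, heM a j' k⟩)
      fun k _ => (hz k).le
  have hS : ∀ a, ∑ j', w a j' * y j' ∈ Set.Icc (μ * Z * Y) (M * Z * Y) := fun a =>
    sum_mul_mem_Icc_of_forall_mem_Icc (fun j' _ => hw a j') fun j' _ => (hy j').le
  have hsum : ∑ j', ly j' = L := by simp only [hlydef, hLdef]; exact sum_comm
  have hYL : μ * L ≤ ly i0 * M * Y := hsum ▸
    mul_sum_le_mul_sum_of_forall_mul_div_le (mul_pos hly1 (hμ.trans_le hμM)) fun j' _ => hybox j'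
  have hlx : ∀ a, 0 ≤ lx a := fun a => hlxdef a ▸
    sum_nonneg fun _ _ => sum_nonneg fun _ _ => hl _ _ _
  have hSi : ∑ j', w i j' * y j' ≠ 0 := (mul_pos (mul_pos hμ hZ) hY).trans_le (hS i).1 |>.ne'
  simp only [sum_sum_mul_mul_eq_sum_mul]
  have hc : 0 ≤ lx i / lx i0 := div_nonneg (hlx i) (hlx i0)
  rw [deriv_const_mul_div_sum_mul_update _ _ _ _ _ hSi, abs_mul, abs_of_nonneg hc]
  refine mul_le_mul_of_nonneg_left ?_ hc
  exact (abs_mul_sub_mul_div_sq_le (by positivity) (by positivity) (hw i0 j) (hw i j) (hS i0)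
    (hS i)).trans (interval_bound_le_rating_constant hμ hμM hY hZ hL hYL)

theorem rating_map_simplified_derivative_bound (d : ℕ) (hd : 0 < d)
    (e : Fin d → Fin d → Fin d → ℝ) (l : Fin d → Fin d → Fin d → ℝ)
    (hl : ∀ i j k, 0 ≤ l i j k)
    (μ M : ℝ) (hμ : 0 < μ)
    (hμdef : μ = Finset.univ.inf'
      (Finset.univ_nonempty_iff.mpr ⟨(⟨0, hd⟩, ⟨0, hd⟩, ⟨0, hd⟩)⟩)
      (fun v : Fin d × Fin d × Fin d => e v.1 v.2.1 v.2.2))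
    (hMdef : M = Finset.univ.sup'
      (Finset.univ_nonempty_iff.mpr ⟨(⟨0, hd⟩, ⟨0, hd⟩, ⟨0, hd⟩)⟩)
      (fun v : Fin d × Fin d × Fin d => e v.1 v.2.1 v.2.2))
    (L : ℝ) (hLdef : L = ∑ i, ∑ j, ∑ k, l i j k) (hL : 0 < L)
    (lx : Fin d → ℝ) (ly : Fin d → ℝ)
    (hlxdef : ∀ i, lx i = ∑ j, ∑ k, l i j k)
    (hlydef : ∀ j, ly j = ∑ i, ∑ k, l i j k)
    (hlx1 : 0 < lx ⟨0, hd⟩) (hly1 : 0 < ly ⟨0, hd⟩)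
    (y : Fin d → ℝ) (z : Fin d → ℝ)
    (hy : ∀ j', 0 < y j') (hz : ∀ k, 0 < z k)
    (hybox : ∀ j', ly j' * μ / (ly ⟨0, hd⟩ * M) ≤ y j')
    (i : Fin d) (j : Fin d) :
    |deriv (fun t : ℝ => lx i / lx ⟨0, hd⟩ *
        ((∑ j', ∑ k, e ⟨0, hd⟩ j' k * Function.update y j t j' * z k) /
          (∑ j', ∑ k, e i j' k * Function.update y j t j' * z k))) (y j)|
      ≤ lx i / lx ⟨0, hd⟩ * (M * (M ^ 2 - μ ^ 2) * ly ⟨0, hd⟩ / (μ ^ 3 * L)) :=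
  rating_map_simplified_derivative_bound_general d hd e l hl μ M hμ hμdef hMdef L hLdef hL lx ly
    hlxdef hlydef hly1 y z hy hz hybox i j
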